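/- Let g_1, …, g_N be nonconstant entire holomorphic functions on ℂ^n, and for a = (a_1, …, a_N) ∈ ℂ^N set g_j^{a_j} := g_j − a_j. Then there exists a dense G_δ set A ⊆ ℂ^N such that for every a ∈ A the following holds: for any choice of n+1 pairwise distinct indices i_1, …, i_{n+1} ∈ {1, …, N}, the intersection of the zero sets Z(g_{i_1}^{a_{i_1}}) ∩ ⋯ ∩ Z(g_{i_{n+1}}^{a_{i_{n+1}}}) is empty. -/

import Mathlib

open Set Topology Manifold Pointwise Metric MvPolynomial

noncomputable section

/-- The polynomial hull of a set `K ⊆ ℂ^n`: the points `z` with `|p(z)| ≤ sup_K |p|` for every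
polynomial `p` in `n` complex variables. -/
def polyHull (n : ℕ) (K : Set (Fin n → ℂ)) : Set (Fin n → ℂ) :=
  {z | ∀ p : MvPolynomial (Fin n) ℂ,
    ‖MvPolynomial.eval z p‖ ≤ sSup ((fun w => ‖MvPolynomial.eval w p‖) '' K)}

/-- A compact set is polynomially convex if it equals its polynomial hull. -/
def PolyConvex (n : ℕ) (K : Set (Fin n → ℂ)) : Prop := polyHull n K = K

/-- `h(K)`: the closure of `K̂ \ K`. -/
def hullRem (n : ℕ) (K : Set (Fin n → ℂ)) : Set (Fin n → ℂ) :=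
  closure (polyHull n K \ K)

/-- A set `S ⊆ ℂ^n` contains an analytic disc: there is a nonconstant holomorphic map from the
unit disc into `ℂ^n` whose image lies in `S`. -/
def ContainsAnalyticDisc {n : ℕ} (S : Set (Fin n → ℂ)) : Prop :=
  ∃ φ : ℂ → (Fin n → ℂ), DifferentiableOn ℂ φ (ball (0 : ℂ) 1) ∧
    (¬ ∃ c, ∀ z ∈ ball (0 : ℂ) 1, φ z = c) ∧
    φ '' ball (0 : ℂ) 1 ⊆ S

section ManifoldDefs

variable {E : Type*} [NormedAddCommGroup E] [NormedSpace ℝ E]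
  {H : Type*} [TopologicalSpace H]
  {M : Type*} [TopologicalSpace M] [ChartedSpace H M]
  {E' : Type*} [NormedAddCommGroup E'] [NormedSpace ℝ E']
  {H' : Type*} [TopologicalSpace H']
  {M' : Type*} [TopologicalSpace M'] [ChartedSpace H' M']

/-- A `C^k` embedding between manifolds: a `C^k` map which is a topological embedding and an
immersion. -/
def IsCkEmbedding (I : ModelWithCorners ℝ E H) (I' : ModelWithCorners ℝ E' H') (k : ℕ∞)
    (f : M → M') : Prop :=
  ContMDiff I I' k f ∧ IsEmbedding f ∧ ∀ x : M, Function.Injective (mfderiv I I' f x)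

/-- The image of the differential `d_x f` of a map `f : M → ℂ^n`, as a real subspace of `ℂ^n`. -/
def mdiffImage {n : ℕ} (I : ModelWithCorners ℝ E H) (f : M → (Fin n → ℂ)) (x : M) :
    Set (Fin n → ℂ) :=
  Set.range (fun v : TangentSpace I x =>
    (mfderiv I (modelWithCornersSelf ℝ (Fin n → ℂ)) f x v : Fin n → ℂ))

/-- A totally real `C^k` embedding `f : M → ℂ^n`: a `C^k` embedding such that at every point the
image of the differential `T` satisfies `T ∩ i·T = {0}`. -/
def IsTotallyRealCkEmbedding {n : ℕ} (I : ModelWithCorners ℝ E H) (k : ℕ∞)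
    (f : M → (Fin n → ℂ)) : Prop :=
  IsCkEmbedding I (modelWithCornersSelf ℝ (Fin n → ℂ)) k f ∧
  ∀ x : M, mdiffImage I f x ∩ (Complex.I • mdiffImage I f x) = {0}

/-- `‖f‖_{C^k(M)} < ε` for a map `f` from a manifold to `ℂ^n`: at every point, in the preferred
chart, all derivatives of order at most `k` have norm `< ε`. -/
def CkNormLt {n : ℕ} (I : ModelWithCorners ℝ E H) (k : ℕ) (f : M → (Fin n → ℂ)) (ε : ℝ) : Prop :=
  ∀ x : M, ∀ i : ℕ, i ≤ k →
    ‖iteratedFDerivWithin ℝ i (f ∘ (extChartAt I x).symm)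
      ((extChartAt I x).target) ((extChartAt I x) x)‖ < ε

end ManifoldDefs

/-! For injective `ι`, the parameters `a` with a common zero of the `g (ι l) - a (ι l)` are those
whose restriction `a ∘ ι` lies in the range of `z ↦ (g (ι l) z)_l : ℂ^n → ℂ^(n+1)`. That map is
holomorphic, hence `C¹`, so by the dimension count its range has dense complement; the range of
the σ-compact `ℂ^n` is moreover `F_σ`. Pulling back along the open map `a ↦ a ∘ ι` and
intersecting over the finitely many `ι`, Baire's theorem gives a dense `G_δ`. -/

section Holomorphic

variable {E F : Type*} [NormedAddCommGroup E] [NormedSpace ℂ E]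
  [NormedAddCommGroup F] [NormedSpace ℂ F] {f : E → F}

theorem norm_fderiv_apply_le_of_forall_norm_le (hf : Differentiable ℂ f) {z v : E} {C : ℝ}
    (hC : ∀ w : ℂ, ‖w‖ = 1 → ‖f (z + w • v)‖ ≤ C) : ‖fderiv ℂ f z v‖ ≤ C := by
  have hline : Differentiable ℂ fun w : ℂ => f (z + w • v) :=
    hf.comp ((differentiable_id.smul_const v).const_add z)
  have hderiv : HasDerivAt (fun w : ℂ => f (z + w • v)) (fderiv ℂ f z v) 0 := by
    have := (hf (z + (0 : ℂ) • v)).hasFDerivAt.comp_hasDerivAt (0 : ℂ)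
      (((hasDerivAt_id (0 : ℂ)).smul_const v).const_add z)
    simpa [Function.comp_def] using this
  have := Complex.norm_deriv_le_of_forall_mem_sphere_norm_le one_pos hline.diffContOnCl
    (fun w hw => hC w (mem_sphere_zero_iff_norm.1 hw))
  rwa [hderiv.deriv, div_one] at this

theorem Differentiable.continuous_fderiv_of_finiteDimensional [FiniteDimensional ℂ E]
    (hf : Differentiable ℂ f) : Continuous (fderiv ℂ f) := by
  refine continuous_clm_apply.2 fun v => Metric.continuous_iff.2 fun z₀ ε hε => ?_
  obtain ⟨δ, hδ, hunif⟩ := Metric.uniformContinuousOn_iff.1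
    ((isCompact_closedBall z₀ (1 + ‖v‖)).uniformContinuousOn_of_continuous
      hf.continuous.continuousOn) (ε / 2) (half_pos hε)
  refine ⟨min δ 1, by positivity, fun z hz => ?_⟩
  have hball : ∀ y ∈ closedBall z₀ 1, ∀ w : ℂ, ‖w‖ = 1 →
      y + w • v ∈ closedBall z₀ (1 + ‖v‖) := fun y hy w hw => by
    rw [mem_closedBall_iff_norm] at hy ⊢
    calc ‖y + w • v - z₀‖ = ‖(y - z₀) + w • v‖ := by rw [add_sub_right_comm]
      _ ≤ ‖y - z₀‖ + ‖w • v‖ := norm_add_le _ _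
      _ ≤ 1 + ‖v‖ := by rw [norm_smul, hw, one_mul]; gcongr
  -- The Cauchy estimate for `f - f (· + (z₀ - z))` on the complex line through `z` bounds the
  -- change of the derivative by the oscillation of `f`, which uniform continuity controls.
  set h : E → F := fun y => f y - f (y + (z₀ - z))
  have hderiv : HasFDerivAt h (fderiv ℂ f z - fderiv ℂ f z₀) z := by
    refine (hf z).hasFDerivAt.sub ((hasFDerivAt_comp_add_right (z₀ - z)).2 ?_)
    rw [add_sub_cancel]
    exact (hf z₀).hasFDerivAt
  have hbound : ‖fderiv ℂ h z v‖ ≤ ε / 2 := by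
    refine norm_fderiv_apply_le_of_forall_norm_le
      (hf.sub (hf.comp (differentiable_id.add_const _))) fun w hw => ?_
    change ‖f (z + w • v) - f (z + w • v + (z₀ - z))‖ ≤ ε / 2
    rw [show z + w • v + (z₀ - z) = z₀ + w • v by abel, ← dist_eq_norm]
    refine (hunif _ (hball z ?_ w hw) _ (hball z₀ (mem_closedBall_self zero_le_one) w hw) ?_).le
    · exact mem_closedBall.2 (hz.le.trans (min_le_right _ _))
    · rw [dist_add_right]
      exact hz.trans_le (min_le_left _ _)
  rw [hderiv.fderiv, sub_apply, ← dist_eq_norm] at hbound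
  linarith

theorem Differentiable.contDiff_one_of_finiteDimensional [FiniteDimensional ℂ E]
    (hf : Differentiable ℂ f) : ContDiff ℂ 1 f :=
  contDiff_one_iff_fderiv.2 ⟨hf, hf.continuous_fderiv_of_finiteDimensional⟩

theorem Differentiable.dense_compl_range_of_finrank_lt_finrank [FiniteDimensional ℂ E]
    [FiniteDimensional ℂ F] (hf : Differentiable ℂ f)
    (hEF : Module.finrank ℂ E < Module.finrank ℂ F) : Dense (range f)ᶜ := by
  refine (hf.contDiff_one_of_finiteDimensional.restrict_scalars ℝ)
    |>.dense_compl_range_of_finrank_lt_finrank ?_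
  rw [finrank_real_of_complex, finrank_real_of_complex]
  omega

end Holomorphic

theorem isGδ_compl_range_of_continuous {X Y : Type*} [TopologicalSpace X] [SigmaCompactSpace X]
    [TopologicalSpace Y] [T2Space Y] {f : X → Y} (hf : Continuous f) : IsGδ (range f)ᶜ := by
  rw [← image_univ, ← iUnion_compactCovering X, image_iUnion, compl_iUnion]
  exact .iInter fun k => ((isCompact_compactCovering X k).image hf).isClosed.isOpen_compl.isGδ

theorem statement4_general {n N : ℕ} (g : Fin N → ((Fin n → ℂ) → ℂ))
    (hg : ∀ j, Differentiable ℂ (g j)) :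
    ∃ A : Set (Fin N → ℂ), Dense A ∧ IsGδ A ∧
      ∀ a ∈ A, ∀ ι : Fin (n + 1) → Fin N, Function.Injective ι →
        (⋂ l : Fin (n + 1), {z : Fin n → ℂ | g (ι l) z - a (ι l) = 0}) = ∅ := by
  set G : (Fin (n + 1) → Fin N) → (Fin n → ℂ) → Fin (n + 1) → ℂ := fun ι z l => g (ι l) z
  set good : (Fin (n + 1) → Fin N) → Set (Fin N → ℂ) := fun ι => (· ∘ ι) ⁻¹' (range (G ι))ᶜ
  have hgood : ∀ ι : {ι : Fin (n + 1) → Fin N // Function.Injective ι},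
      Dense (good ι) ∧ IsGδ (good ι) := by
    rintro ⟨ι, hι⟩
    have hG : Differentiable ℂ (G ι) := differentiable_pi.2 fun l => hg (ι l)
    have hopen : IsOpenMap (· ∘ ι : (Fin N → ℂ) → Fin (n + 1) → ℂ) :=
      (LinearMap.funLeft ℂ ℂ ι).isOpenMap_of_finiteDimensional
        (LinearMap.funLeft_surjective_of_injective ℂ ℂ ι hι)
    refine ⟨(hG.dense_compl_range_of_finrank_lt_finrank ?_).preimage hopen,
      (isGδ_compl_range_of_continuous hG.continuous).preimage (by fun_prop)⟩
    simp
  refine ⟨⋂ ι : {ι // Function.Injective ι}, good ι, dense_iInter_of_Gδ (fun ι => (hgood ι).2)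
    (fun ι => (hgood ι).1), .iInter fun ι => (hgood ι).2, fun a ha ι hι => ?_⟩
  refine eq_empty_iff_forall_notMem.2 fun z hz => mem_iInter.1 ha ⟨ι, hι⟩ ⟨z, funext fun l => ?_⟩
  exact sub_eq_zero.1 (mem_iInter.1 hz l)

theorem statement4 {n N : ℕ} (g : Fin N → ((Fin n → ℂ) → ℂ))
    (hg : ∀ j, Differentiable ℂ (g j)) (hgc : ∀ j, ¬ ∃ c : ℂ, ∀ z, g j z = c) :
    ∃ A : Set (Fin N → ℂ), Dense A ∧ IsGδ A ∧
      ∀ a ∈ A, ∀ ι : Fin (n + 1) → Fin N, Function.Injective ι →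
        (⋂ l : Fin (n + 1), {z : Fin n → ℂ | g (ι l) z - a (ι l) = 0}) = ∅ :=
  statement4_general g hg
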